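/- For every first-order grammar G = (N, Σ, R) and all numbers n, s, g ∈ ℕ, there exists a unique full (n,s,g)-candidate basis B_{n,s,g} for non-equivalence. -/

import Mathlib

open scoped ENat

noncomputable section

namespace FOG

/-- A node label: a nonterminal or a variable (variable `x_{i+1}` has index `i`). -/
abbrev Sym (Nt : Type) := Nt ⊕ ℕ

/-- A (pre)term over the nonterminals `Nt` and the variables, given by its
(partial) labelling of tree positions; possibly infinite terms are allowed. -/
abbrev PreTerm (Nt : Type) := List ℕ → Option (Sym Nt)

variable {Nt : Type}

/-- the term consisting of the single variable `x_{i+1}` -/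
def varPre (i : ℕ) : PreTerm Nt := fun p => if p = [] then some (Sum.inr i) else none

/-- the subterm of `E` rooted at position `p` -/
def subAt (E : PreTerm Nt) (p : List ℕ) : PreTerm Nt := fun q => E (p ++ q)

/-- the positions (nodes) of a term -/
def positions (E : PreTerm Nt) : Set (List ℕ) := {p | E p ≠ none}

/-- the set of subterms of a term -/
def subterms (E : PreTerm Nt) : Set (PreTerm Nt) := {F | ∃ p, E p ≠ none ∧ F = subAt E p}

/-- the size `|E|` of a term: its number of distinct subterms -/
def size1 (E : PreTerm Nt) : ℕ := (subterms E).ncard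

/-- `|E,F|`: the number of distinct subterms of `E` and `F` together -/
def size2 (E F : PreTerm Nt) : ℕ := (subterms E ∪ subterms F).ncard

/-- the set of (indices of) variables occurring in a term -/
def varsOf (E : PreTerm Nt) : Set ℕ := {i | ∃ p, E p = some (Sum.inr i)}

/-- `vars(E,F)` -/
def vars2 (E F : PreTerm Nt) : Set ℕ := varsOf E ∪ varsOf F

/-- the number of distinct subterms of `E` whose root label is a nonterminal -/
def ntcount (E : PreTerm Nt) : ℕ :=
  {F | F ∈ subterms E ∧ ∃ A : Nt, F [] = some (Sum.inl A)}.ncard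

/-- the height of a (finite) term -/
def heightP (E : PreTerm Nt) : ℕ := sSup {n | ∃ p ∈ positions E, p.length = n}

/-- Well-formedness: the root is labelled, and a child position `p ++ [i]` is
labelled iff `p` carries a nonterminal of arity `> i`; variables are leaves. -/
def IsTerm (ar : Nt → ℕ) (E : PreTerm Nt) : Prop :=
  E [] ≠ none ∧ ∀ p i, (E (p ++ [i]) ≠ none ↔ ∃ A, E p = some (Sum.inl A) ∧ i < ar A)

/-- a regular term: a term with finitely many distinct subterms -/
def IsRegTerm (ar : Nt → ℕ) (E : PreTerm Nt) : Prop := IsTerm ar E ∧ (subterms E).Finite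

/-- a finite term -/
def IsFinTerm (ar : Nt → ℕ) (E : PreTerm Nt) : Prop := IsTerm ar E ∧ (positions E).Finite

/-- does an (optional) label carry a variable? -/
def isVarLabel : Option (Sym Nt) → Bool
  | some (Sum.inr _) => true
  | _ => false

/-- The term `Eσ` obtained by applying the substitution `σ` to `E`:  at a position
`p = p₁ ++ p₂` where `p₁` is the (unique, if any) prefix of `p` at which `E` carries
a variable `x`, the label is that of `σ(x)` at `p₂`; elsewhere it is that of `E`. -/
def substPre (E : PreTerm Nt) (σ : ℕ → PreTerm Nt) : PreTerm Nt := fun p =>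
  match (List.range (p.length + 1)).find? (fun k => isVarLabel (E (p.take k))) with
  | some k =>
    match E (p.take k) with
    | some (Sum.inr i) => σ i (p.drop k)
    | _ => none
  | none => E p

/-- the term `A(x_1,…,x_k)σ`, whose root is `A` and whose `j`-th child is `σ(x_{j+1})` -/
def headTerm (A : Nt) (k : ℕ) (σ : ℕ → PreTerm Nt) : PreTerm Nt := fun p =>
  match p with
  | [] => some (Sum.inl A)
  | j :: p' => if j < k then σ j p' else none

/-- a rule `A(x_1,…,x_{ar(A)}) →_a E` of a first-order grammar -/
structure GRule (Nt Act : Type) where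
  lhsA : Nt
  act : Act
  rhs : PreTerm Nt

/-- a first-order grammar `G = (N, Σ, R)` -/
structure Grammar where
  Nt : Type
  Act : Type
  ar : Nt → ℕ
  rules : Set (GRule Nt Act)

/-- Well-formedness of a first-order grammar: the ranked alphabet `N` and the action
alphabet `Σ` are finite, there are finitely many rules, and each right-hand side is a
finite term all of whose variables are among `x_1, …, x_{ar(A)}` for the
left-hand-side nonterminal `A`. -/
def Grammar.WF (G : Grammar) : Prop :=
  Finite G.Nt ∧ Finite G.Act ∧ G.rules.Finite ∧
    ∀ r ∈ G.rules, IsFinTerm G.ar r.rhs ∧ varsOf r.rhs ⊆ {i | i < G.ar r.lhsA}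

/-- The transition relation of the labelled transition system `L_G`: each rule
`A(x_1,…,x_{ar(A)}) →_a E` induces `A(x_1,…,x_{ar(A)})σ →_a Eσ` for every
substitution `σ`. -/
def gstepP (G : Grammar) (a : G.Act) (E F : PreTerm G.Nt) : Prop :=
  ∃ r ∈ G.rules, r.act = a ∧
    ∃ σ : ℕ → PreTerm G.Nt, E = headTerm r.lhsA (G.ar r.lhsA) σ ∧ F = substPre r.rhs σ

/-- The transition relation of `L_G` augmented with a self-loop `x →_{a_x} x` with
a fresh action `a_x` for every variable `x` (so that `el(x,E) = 0` for `E ≠ x`). -/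
def gstepA (G : Grammar) : G.Act ⊕ ℕ → PreTerm G.Nt → PreTerm G.Nt → Prop
  | Sum.inl a => gstepP G a
  | Sum.inr i => fun E F => E = varPre i ∧ F = varPre i

section LTS

variable {Act S : Type*}

/-- `R` is a (strong) bisimulation for the transition relation `tr` -/
def IsBisim (tr : Act → S → S → Prop) (R : S → S → Prop) : Prop :=
  ∀ s t, R s t →
    (∀ a s', tr a s s' → ∃ t', tr a t t' ∧ R s' t') ∧
    (∀ a t', tr a t t' → ∃ s', tr a s s' ∧ R s' t')

/-- bisimilarity: the largest bisimulation -/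
def Bisim (tr : Act → S → S → Prop) (s t : S) : Prop := ∃ R, IsBisim tr R ∧ R s t

/-- the approximants `∼_k` of bisimilarity -/
def approx (tr : Act → S → S → Prop) : ℕ → S → S → Prop
  | 0 => fun _ _ => True
  | k + 1 => fun s t => approx tr k s t ∧
      (∀ a s', tr a s s' → ∃ t', tr a t t' ∧ approx tr k s' t') ∧
      (∀ a t', tr a t t' → ∃ s', tr a s s' ∧ approx tr k s' t')

/-- the equivalence level `el(s,t) = sup {k ∈ ℕ | s ∼_k t} ∈ ℕ ∪ {ω}` -/
def elev (tr : Act → S → S → Prop) (s t : S) : ℕ∞ :=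
  sSup {e : ℕ∞ | ∃ k : ℕ, approx tr k s t ∧ e = (k : ℕ∞)}

end LTS

/-- the size `|G|` of a grammar -/
def gsize (G : Grammar) : ℕ := ∑ᶠ r ∈ G.rules, (G.ar r.lhsA + 1 + size1 r.rhs)

/-- `m`: the maximal arity of a nonterminal -/
def maxAr (G : Grammar) : ℕ := sSup (Set.range G.ar)

/-- `hinc`: the maximal height increase in one transition step -/
def hinc (G : Grammar) : ℕ := sSup {k | ∃ r ∈ G.rules, k = heightP r.rhs - 1}

/-- `sinc`: the maximal size increase in one transition step -/
def sinc (G : Grammar) : ℕ := sSup {k | ∃ r ∈ G.rules, k = ntcount r.rhs}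

end FOG

namespace FOG

/-- An `(n,s,g)`-candidate basis for non-equivalence: a set `B` of pairs of
non-bisimilar regular terms together with numbers `(s_i)_{i≤n}` and `(e_i)_{i≤n}`
such that each pair `(E,F) ∈ B` satisfies `vars(E,F) = {x_1,…,x_i}` and
`|E,F| ≤ s_i` for some `i ≤ n`, `s_n = s`,
`e_i = max {el(E,F) | (E,F) ∈ B, |E,F| ≤ s_i}` (with `max ∅ = 0`), and
`s_{i-1} = 2·s_i + g + e_i·(sinc + g)`. -/
structure CBasis (G : Grammar) (n s g : ℕ) where
  B : Set (PreTerm G.Nt × PreTerm G.Nt)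
  sq : ℕ → ℕ
  eq : ℕ → ℕ
  regular : ∀ p ∈ B, IsRegTerm G.ar p.1 ∧ IsRegTerm G.ar p.2
  nonequiv : ∀ p ∈ B, ¬ Bisim (gstepA G) p.1 p.2
  mem_bounds : ∀ p ∈ B, ∃ i ≤ n, vars2 p.1 p.2 = {k | k < i} ∧ size2 p.1 p.2 ≤ sq i
  sq_last : sq n = s
  eq_def : ∀ i ≤ n, (eq i : ℕ∞) =
    sSup {e : ℕ∞ | ∃ p ∈ B, size2 p.1 p.2 ≤ sq i ∧ elev (gstepA G) p.1 p.2 = e}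
  sq_def : ∀ i < n, sq i = 2 * sq (i + 1) + g + eq (i + 1) * (sinc G + g)

/-- `Pairs_i`: the pairs of regular terms `(E,F)` with `vars(E,F) = {x_1,…,x_j}`
for some `j ≤ i` and `|E,F| ≤ s_i`. -/
def PairsI (G : Grammar) (sq : ℕ → ℕ) (i : ℕ) : Set (PreTerm G.Nt × PreTerm G.Nt) :=
  {p | IsRegTerm G.ar p.1 ∧ IsRegTerm G.ar p.2 ∧
    (∃ j ≤ i, vars2 p.1 p.2 = {k | k < j}) ∧ size2 p.1 p.2 ≤ sq i}

/-- a candidate basis is full below `e` if it contains every pair of `Pairs_i`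
(for every `i ≤ n`) whose equivalence level is `< e` -/
def CBasis.FullBelow {G : Grammar} {n s g : ℕ} (C : CBasis G n s g) (e : ℕ∞) : Prop :=
  ∀ i ≤ n, ∀ p ∈ PairsI G C.sq i, elev (gstepA G) p.1 p.2 < e → p ∈ C.B

/-- a full candidate basis (full below `ω`) -/
def CBasis.Full {G : Grammar} {n s g : ℕ} (C : CBasis G n s g) : Prop := C.FullBelow ⊤

/-- the bound `E_B = n + 1 + Σ_{i=0}^{n} e_i` associated with a candidate basis -/
def EBound {G : Grammar} {n s g : ℕ} (C : CBasis G n s g) : ℕ :=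
  n + 1 + ∑ i ∈ Finset.range (n + 1), C.eq i

end FOG

/-!
Every pair in a candidate basis has finite equivalence level, being bounded by some `e_j`. Hence a
full basis consists exactly of the pairs of finite level in the size windows `|E,F| ≤ s_j`, and
`e_i` only depends on `s_i, …, s_n`. So `s_n = s` and the recursion for `s_{i-1}` determine the
whole basis by downward induction, and the same recursion defines one. The `e_i` are finite
because over a finite ranked alphabet there are only finitely many regular
terms with at most `c` distinct subterms and variables among `x_1, …, x_n`: such a term is
determined by a numbering of its subterms by `Fin (c + 1)` together with the label and the
children's numbers of each subterm.
-/

namespace FOG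

section Terms

variable {Nt : Type} {ar : Nt → ℕ}

theorem eq_of_bisim {R : PreTerm Nt → PreTerm Nt → Prop}
    (hR : ∀ F F', R F F' → F [] = F' [] ∧ ∀ i, R (subAt F [i]) (subAt F' [i]))
    {E E' : PreTerm Nt} (h : R E E') : E = E' := by
  funext p
  induction p generalizing E E' with
  | nil => exact (hR E E' h).1
  | cons i p ih => exact ih ((hR E E' h).2 i)

lemma self_mem_subterms {E : PreTerm Nt} (h : E [] ≠ none) : E ∈ subterms E :=
  ⟨[], h, rfl⟩

lemma subAt_mem_subterms {E F : PreTerm Nt} (hF : F ∈ subterms E) {q : List ℕ}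
    (hq : F q ≠ none) : subAt F q ∈ subterms E := by
  obtain ⟨p, -, rfl⟩ := hF
  exact ⟨p ++ q, by simpa [subAt] using hq, by funext r; simp [subAt]⟩

namespace IsTerm

lemma ne_none_of_append {F : PreTerm Nt} (hF : IsTerm ar F) (p : List ℕ) :
    ∀ q, F (p ++ q) ≠ none → F p ≠ none := by
  intro q
  induction q using List.reverseRecOn with
  | nil => simp
  | append_singleton q i ih =>
    intro h
    obtain ⟨A, hA, -⟩ := (hF.2 (p ++ q) i).mp (by simpa using h)
    exact ih (by simp [hA])

lemma subAt {F : PreTerm Nt} (hF : IsTerm ar F) {p : List ℕ} (hp : F p ≠ none) :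
    IsTerm ar (subAt F p) :=
  ⟨by simpa [FOG.subAt] using hp, fun q i => by simpa [FOG.subAt] using hF.2 (p ++ q) i⟩

lemma of_mem_subterms {E F : PreTerm Nt} (hE : IsTerm ar E) (hF : F ∈ subterms E) :
    IsTerm ar F := by
  obtain ⟨p, hp, rfl⟩ := hF
  exact hE.subAt hp

lemma subAt_eq_none {F : PreTerm Nt} (hF : IsTerm ar F) {i : ℕ} (hi : F [i] = none) :
    FOG.subAt F [i] = fun _ => none := by
  funext q
  by_contra h
  exact hF.ne_none_of_append [i] q h hi

lemma child_eq_none_iff {F F' : PreTerm Nt} (hF : IsTerm ar F) (hF' : IsTerm ar F')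
    (h : F [] = F' []) (i : ℕ) : F [i] = none ↔ F' [i] = none := by
  have hF_i := hF.2 [] i
  rw [h] at hF_i
  exact not_iff_not.mp (hF_i.trans (hF'.2 [] i).symm)

lemma lt_of_child_ne_none {F : PreTerm Nt} (hF : IsTerm ar F) {mv : ℕ} (hmv : ∀ A, ar A ≤ mv)
    {i : ℕ} (hi : F [i] ≠ none) : i < mv := by
  obtain ⟨A, -, hA⟩ := (hF.2 [] i).mp (by simpa using hi)
  exact hA.trans_le (hmv A)

end IsTerm

variable (mv : ℕ) {m : ℕ} in
def subtermCode (ι : PreTerm Nt → Fin m) (E : PreTerm Nt) :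
    Fin m × Set (Fin m × Option (Sym Nt) × (Fin mv → Fin m)) :=
  (ι E, (fun F => (ι F, F [], fun i => ι (subAt F [i]))) '' subterms E)

lemma exists_injOn_subterms {E : PreTerm Nt} (hE : (subterms E).Finite) {c : ℕ}
    (hc : size1 E ≤ c) : ∃ ι : PreTerm Nt → Fin (c + 1), Set.InjOn ι (subterms E) := by
  have hcard : (subterms E).encard ≤ (Set.univ : Set (Fin (c + 1))).encard := by
    rw [← hE.cast_ncard_eq, Set.encard_univ, ENat.card_eq_coe_fintype_card, Fintype.card_fin]
    exact_mod_cast hc.trans c.le_succ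
  obtain ⟨ι, -, hι⟩ := hE.exists_injOn_of_encard_le hcard
  exact ⟨ι, hι⟩

lemma eq_of_subtermCode_eq {mv m : ℕ} (hmv : ∀ A, ar A ≤ mv) {E E' : PreTerm Nt}
    (hE : IsTerm ar E) (hE' : IsTerm ar E') {ι ι' : PreTerm Nt → Fin m}
    (hι' : Set.InjOn ι' (subterms E'))
    (hcode : subtermCode mv ι E = subtermCode mv ι' E') : E = E' := by
  refine eq_of_bisim (R := fun F F' => F = F' ∨
    (F ∈ subterms E ∧ F' ∈ subterms E' ∧ ι F = ι' F')) ?_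
    (Or.inr ⟨self_mem_subterms hE.1, self_mem_subterms hE'.1, congrArg Prod.fst hcode⟩)
  rintro F F' (rfl | ⟨hF, hF', hFF'⟩)
  · exact ⟨rfl, fun _ => Or.inl rfl⟩
  have hmem : (ι F, F [], fun i : Fin mv => ι (subAt F [i])) ∈ (subtermCode mv ι' E').2 :=
    hcode ▸ ⟨F, hF, rfl⟩
  obtain ⟨F'', hF'', hdata⟩ := hmem
  simp only [Prod.mk.injEq] at hdata
  obtain ⟨hι'', hroot, hchild⟩ := hdata
  obtain rfl : F' = F'' := hι' hF' hF'' (hFF'.symm.trans hι''.symm)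
  have hT := hE.of_mem_subterms hF
  have hT' := hE'.of_mem_subterms hF'
  have hnone (i : ℕ) := hT.child_eq_none_iff hT' hroot.symm i
  refine ⟨hroot.symm, fun i => ?_⟩
  by_cases hi : F [i] = none
  · exact Or.inl (by rw [hT.subAt_eq_none hi, hT'.subAt_eq_none ((hnone i).mp hi)])
  · exact Or.inr ⟨subAt_mem_subterms hF hi, subAt_mem_subterms hF' ((hnone i).not.mp hi),
      (congrFun hchild ⟨i, hT.lt_of_child_ne_none hmv hi⟩).symm⟩

theorem finite_setOf_isRegTerm [Finite Nt] (ar : Nt → ℕ) (c nv : ℕ) :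
    {E : PreTerm Nt | IsRegTerm ar E ∧ size1 E ≤ c ∧ varsOf E ⊆ {k | k < nv}}.Finite := by
  set T := {E : PreTerm Nt | IsRegTerm ar E ∧ size1 E ≤ c ∧ varsOf E ⊆ {k | k < nv}}
  obtain ⟨mv, hmv⟩ : ∃ mv, ∀ A, ar A ≤ mv :=
    let ⟨mv, hmv⟩ := (Set.finite_range ar).bddAbove
    ⟨mv, fun A => hmv ⟨A, rfl⟩⟩
  have hι : ∀ E ∈ T, ∃ ι : PreTerm Nt → Fin (c + 1), Set.InjOn ι (subterms E) :=
    fun E hE => exists_injOn_subterms hE.1.2 hE.2.1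
  choose! ι hι using hι
  let labels : Set (Option (Sym Nt)) :=
    Set.range (fun A => some (Sum.inl A)) ∪ (fun k => some (Sum.inr k)) '' {k | k < nv}
  have hlabels : labels.Finite := (Set.finite_range _).union ((Set.finite_lt_nat nv).image _)
  refine Set.Finite.of_finite_image (f := fun E => subtermCode mv (ι E) E) ?_
    fun E hE E' hE' => eq_of_subtermCode_eq hmv hE.1.1 hE'.1.1 (hι E' hE')
  refine (Set.finite_univ.prod
    (Set.finite_univ.prod (hlabels.prod Set.finite_univ)).finite_subsets).subset ?_
  rintro _ ⟨E, hE, rfl⟩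
  refine ⟨trivial, ?_⟩
  rintro _ ⟨F, ⟨p, hp, rfl⟩, rfl⟩
  refine ⟨trivial, ?_, trivial⟩
  show E (p ++ []) ∈ labels
  rw [List.append_nil]
  rcases hEp : E p with _ | A | k
  · exact absurd hEp hp
  · exact Or.inl ⟨A, rfl⟩
  · exact Or.inr ⟨k, hE.2.2 ⟨p, hEp⟩, rfl⟩

end Terms

section LTS

variable {Act S : Type*} {tr : Act → S → S → Prop}

lemma IsBisim.approx {R : S → S → Prop} (hR : IsBisim tr R) (k : ℕ) :
    ∀ {s t}, R s t → approx tr k s t := by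
  induction k with
  | zero => exact fun _ => trivial
  | succ k ih =>
    intro s t hst
    refine ⟨ih hst, fun a s' hs' => ?_, fun a t' ht' => ?_⟩
    · obtain ⟨t', ht', hR'⟩ := (hR s t hst).1 a s' hs'
      exact ⟨t', ht', ih hR'⟩
    · obtain ⟨s', hs', hR'⟩ := (hR s t hst).2 a t' ht'
      exact ⟨s', hs', ih hR'⟩

lemma not_bisim_of_elev_lt_top {s t : S} (h : elev tr s t < ⊤) : ¬ Bisim tr s t := by
  rintro ⟨R, hR, hst⟩
  obtain ⟨m, hm⟩ := ENat.ne_top_iff_exists.mp h.ne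
  have hle : ((m + 1 : ℕ) : ℕ∞) ≤ elev tr s t := le_sSup ⟨m + 1, hR.approx (m + 1) hst, rfl⟩
  rw [← hm, Nat.cast_le] at hle
  omega

end LTS

section CanonicalBasis

variable (G : Grammar) (n : ℕ)

def fullPairs (f : ℕ → ℕ) : Set (PreTerm G.Nt × PreTerm G.Nt) :=
  {p | IsRegTerm G.ar p.1 ∧ IsRegTerm G.ar p.2 ∧ elev (gstepA G) p.1 p.2 < ⊤ ∧
    ∃ j ≤ n, vars2 p.1 p.2 = {k | k < j} ∧ size2 p.1 p.2 ≤ f j}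

def maxLevel (f : ℕ → ℕ) (c : ℕ) : ℕ :=
  (sSup {e : ℕ∞ | ∃ p ∈ fullPairs G n f, size2 p.1 p.2 ≤ c ∧ elev (gstepA G) p.1 p.2 = e}).toNat

def nextSq (g : ℕ) (f : ℕ → ℕ) (i : ℕ) : ℕ :=
  2 * f (i + 1) + g + maxLevel G n f (f (i + 1)) * (sinc G + g)

/-- Downward recursion from `s_n = s`. Step `i` may only call `s_j` for `j > i`, so it sees the
truncation `j ↦ s_{max j (i+1)}`, which has the same `nextSq` (`canonicalSq_eq_nextSq`). -/
def canonicalSq (s g i : ℕ) : ℕ :=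
  if h : i < n then nextSq G n g (fun j => canonicalSq s g (max j (i + 1))) i else s
termination_by n - i

variable {G n}

lemma fullPairs_congr {f f' : ℕ → ℕ} (h : ∀ j ≤ n, f j = f' j) :
    fullPairs G n f = fullPairs G n f' := by
  ext p
  simp only [fullPairs, Set.mem_ofPred_eq]
  refine and_congr_right' (and_congr_right' (and_congr_right' ?_))
  exact exists_congr fun j => and_congr_right fun hj => by rw [h j hj]

lemma maxLevel_congr {f f' : ℕ → ℕ} {c : ℕ} (h : ∀ j ≤ n, min (f j) c = min (f' j) c) :
    maxLevel G n f c = maxLevel G n f' c := by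
  have key : ∀ p : PreTerm G.Nt × PreTerm G.Nt,
      p ∈ fullPairs G n f ∧ size2 p.1 p.2 ≤ c ↔ p ∈ fullPairs G n f' ∧ size2 p.1 p.2 ≤ c := by
    intro p
    constructor <;> rintro ⟨⟨h1, h2, h3, j, hj, hv, hs⟩, hc⟩ <;>
      refine ⟨⟨h1, h2, h3, j, hj, hv, ?_⟩, hc⟩
    · exact (le_min_iff.mp (h j hj ▸ le_min hs hc)).1
    · exact (le_min_iff.mp ((h j hj).symm ▸ le_min hs hc)).1
  unfold maxLevel
  congr 2
  ext e
  exact exists_congr fun p => by rw [← and_assoc, key p, and_assoc]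

lemma nextSq_congr {g i : ℕ} {f f' : ℕ → ℕ} (hi : i < n)
    (hagree : ∀ j, i < j → j ≤ n → f j = f' j)
    (hf : ∀ j ≤ i, f (i + 1) ≤ f j) (hf' : ∀ j ≤ i, f' (i + 1) ≤ f' j) :
    nextSq G n g f i = nextSq G n g f' i := by
  have hsucc : f (i + 1) = f' (i + 1) := hagree (i + 1) i.lt_succ_self hi
  unfold nextSq
  rw [hsucc, maxLevel_congr]
  intro j hj
  rcases lt_or_ge i j with hij | hji
  · rw [hagree j hij hj]
  · rw [min_eq_right (hsucc ▸ hf j hji), min_eq_right (hf' j hji)]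

variable {s g : ℕ}

lemma canonicalSq_of_lt {i : ℕ} (hi : i < n) : canonicalSq G n s g i =
    nextSq G n g (fun j => canonicalSq G n s g (max j (i + 1))) i := by
  rw [canonicalSq, dif_pos hi]

lemma canonicalSq_of_le {i : ℕ} (hi : n ≤ i) : canonicalSq G n s g i = s := by
  rw [canonicalSq, dif_neg hi.not_gt]

lemma canonicalSq_antitone : Antitone (canonicalSq G n s g) := by
  refine antitone_nat_of_succ_le fun i => ?_
  rcases lt_or_ge i n with hi | hi
  · rw [canonicalSq_of_lt hi, nextSq, max_self]
    omega
  · rw [canonicalSq_of_le hi, canonicalSq_of_le (hi.trans i.le_succ)]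

lemma canonicalSq_eq_nextSq {i : ℕ} (hi : i < n) :
    canonicalSq G n s g i = nextSq G n g (canonicalSq G n s g) i := by
  rw [canonicalSq_of_lt hi]
  refine nextSq_congr hi (fun j hij _ => by rw [max_eq_left hij])
    (fun j hj => by rw [max_self, max_eq_right (by omega : j ≤ i + 1)])
    (fun j hj => canonicalSq_antitone (by omega))

lemma finite_fullPairs_inter_size_le [Finite G.Nt] (f : ℕ → ℕ) (c : ℕ) :
    {p | p ∈ fullPairs G n f ∧ size2 p.1 p.2 ≤ c}.Finite := by
  refine ((finite_setOf_isRegTerm G.ar c n).prod (finite_setOf_isRegTerm G.ar c n)).subset ?_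
  rintro p ⟨⟨hreg₁, hreg₂, -, j, hj, hvars, -⟩, hc⟩
  have hfin : (subterms p.1 ∪ subterms p.2).Finite := hreg₁.2.union hreg₂.2
  have hvars' : vars2 p.1 p.2 ⊆ {k | k < n} := hvars ▸ fun k hk => lt_of_lt_of_le hk hj
  exact ⟨⟨hreg₁, (Set.ncard_le_ncard Set.subset_union_left hfin).trans hc,
      Set.subset_union_left.trans hvars'⟩,
    ⟨hreg₂, (Set.ncard_le_ncard Set.subset_union_right hfin).trans hc,
      Set.subset_union_right.trans hvars'⟩⟩

lemma natCast_maxLevel [Finite G.Nt] (f : ℕ → ℕ) (c : ℕ) : (maxLevel G n f c : ℕ∞) =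
    sSup {e : ℕ∞ | ∃ p ∈ fullPairs G n f, size2 p.1 p.2 ≤ c ∧ elev (gstepA G) p.1 p.2 = e} := by
  set X := {e : ℕ∞ | ∃ p ∈ fullPairs G n f, size2 p.1 p.2 ≤ c ∧ elev (gstepA G) p.1 p.2 = e}
  have hX : X = (fun p => elev (gstepA G) p.1 p.2) ''
      {p | p ∈ fullPairs G n f ∧ size2 p.1 p.2 ≤ c} := by
    ext e
    simp [X, and_assoc]
  have hlt : sSup X < ⊤ := by
    rcases X.eq_empty_or_nonempty with hempty | hne
    · simp [hempty]
    · rw [hX] at hne ⊢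
      refine ((finite_fullPairs_inter_size_le f c).image _).csSup_lt_iff hne |>.mpr ?_
      rintro _ ⟨p, ⟨⟨-, -, hp, -⟩, -⟩, rfl⟩
      exact hp
  exact ENat.natCast_toNat hlt.ne

variable (G n s g) in
def canonicalBasis [Finite G.Nt] : CBasis G n s g where
  B := fullPairs G n (canonicalSq G n s g)
  sq := canonicalSq G n s g
  eq i := maxLevel G n (canonicalSq G n s g) (canonicalSq G n s g i)
  regular _ hp := ⟨hp.1, hp.2.1⟩
  nonequiv _ hp := not_bisim_of_elev_lt_top hp.2.2.1
  mem_bounds _ hp := hp.2.2.2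
  sq_last := canonicalSq_of_le le_rfl
  eq_def _ _ := natCast_maxLevel _ _
  sq_def _ hi := canonicalSq_eq_nextSq hi

lemma canonicalBasis_full [Finite G.Nt] : (canonicalBasis G n s g).Full := by
  rintro i hi p ⟨hreg₁, hreg₂, ⟨j, hji, hvars⟩, hsize⟩ hlt
  exact ⟨hreg₁, hreg₂, hlt, j, hji.trans hi, hvars, hsize.trans (canonicalSq_antitone hji)⟩

end CanonicalBasis

namespace CBasis

variable {G : Grammar} {n s g : ℕ} (C : CBasis G n s g)

lemma elev_lt_top {p : PreTerm G.Nt × PreTerm G.Nt} (hp : p ∈ C.B) :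
    elev (gstepA G) p.1 p.2 < ⊤ := by
  obtain ⟨j, hj, -, hsize⟩ := C.mem_bounds p hp
  calc elev (gstepA G) p.1 p.2 ≤ C.eq j := C.eq_def j hj ▸ le_sSup ⟨p, hp, hsize, rfl⟩
    _ < ⊤ := ENat.natCast_lt_top _

lemma sq_le_sq {i j : ℕ} (hij : i ≤ j) (hj : j ≤ n) : C.sq j ≤ C.sq i := by
  induction j, hij using Nat.le_induction with
  | base => rfl
  | succ j hij ih =>
    have := C.sq_def j hj
    exact (show C.sq (j + 1) ≤ C.sq j by omega).trans (ih (by omega))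

variable {C}

lemma Full.B_eq_fullPairs (hC : C.Full) : C.B = fullPairs G n C.sq := by
  ext p
  constructor
  · intro hp
    exact ⟨(C.regular p hp).1, (C.regular p hp).2, C.elev_lt_top hp, C.mem_bounds p hp⟩
  · rintro ⟨hreg₁, hreg₂, hlt, j, hj, hvars, hsize⟩
    exact hC j hj p ⟨hreg₁, hreg₂, ⟨j, le_rfl, hvars⟩, hsize⟩ hlt

lemma Full.eq_eq_maxLevel (hC : C.Full) {i : ℕ} (hi : i ≤ n) :
    C.eq i = maxLevel G n C.sq (C.sq i) := by
  rw [maxLevel, ← hC.B_eq_fullPairs, ← C.eq_def i hi, ENat.toNat_natCast]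

lemma Full.sq_eq_nextSq (hC : C.Full) {i : ℕ} (hi : i < n) : C.sq i = nextSq G n g C.sq i := by
  rw [C.sq_def i hi, nextSq, hC.eq_eq_maxLevel hi]

lemma Full.sq_eq_canonicalSq (hC : C.Full) {i : ℕ} (hi : i ≤ n) :
    C.sq i = canonicalSq G n s g i := by
  suffices ∀ k i, n - k ≤ i → i ≤ n → C.sq i = canonicalSq G n s g i from this n i (by omega) hi
  intro k
  induction k with
  | zero =>
    intro i _ hi
    obtain rfl : i = n := by omega
    rw [C.sq_last, canonicalSq_of_le le_rfl]
  | succ k ih =>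
    intro i hik hi
    by_cases hik' : n - k ≤ i
    · exact ih i hik' hi
    have hin : i < n := by omega
    rw [hC.sq_eq_nextSq hin, canonicalSq_eq_nextSq hin]
    exact nextSq_congr hin (fun j hij hj => ih j (by omega) hj)
      (fun j hj => C.sq_le_sq (by omega) hin) (fun j hj => canonicalSq_antitone (by omega))

end CBasis

end FOG

open FOG in
theorem exists_unique_full_candidate_basis (G : Grammar) (hG : G.WF) (n s g : ℕ) :
    ∃ C : CBasis G n s g, C.Full ∧
      ∀ C' : CBasis G n s g, C'.Full →
        C'.B = C.B ∧ ∀ i ≤ n, C'.sq i = C.sq i ∧ C'.eq i = C.eq i := by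
  have : Finite G.Nt := hG.1
  refine ⟨canonicalBasis G n s g, canonicalBasis_full, fun C hC => ?_⟩
  have hsq : ∀ i ≤ n, C.sq i = canonicalSq G n s g i := fun i hi => hC.sq_eq_canonicalSq hi
  refine ⟨hC.B_eq_fullPairs.trans (fullPairs_congr hsq), fun i hi => ⟨hsq i hi, ?_⟩⟩
  rw [hC.eq_eq_maxLevel hi, hsq i hi]
  exact maxLevel_congr fun j hj => by rw [hsq j hj]
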